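/- Local homogeneity for representations in C*-algebras: let G be a compact topological group, A a unital C*-algebra, and U a norm-continuous representation of G in A. Then there exists ε > 0 such that for every norm-continuous representation U' of G in A with sup_{g ∈ G} ‖U'(g) − U(g)‖ < ε there is a unitary v ∈ A with U'(g) = v U(g) v* for all g ∈ G. In particular, the orbit of U under conjugation by the unitary group of A is open in the set of norm-continuous representations with the supremum metric. -/

import Mathlib

/-!
Average the "intertwining defect" against the normalized Haar measure:
`z = ∫ U'(g) U(g)* dg` satisfies `U'(h) z = z U(h)` by left invariance, and
`‖z - 1‖ ≤ sup ‖U'(g) - U(g)‖ < 1`, so `z` is invertible. Its polar decomposition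
`z = v |z|` then has a unitary `v`; since every `U(h)` commutes with `z* z`, it commutes with
`|z|⁻¹`, so `v` still intertwines `U` and `U'`.
-/

open MeasureTheory

lemma commute_star_mul_self_of_mul_eq_mul {R : Type*} [Monoid R] [StarMul R] {x y z : R}
    (hx : x ∈ unitary R) (hy : y ∈ unitary R) (h : x * z = z * y) :
    Commute y (star z * z) := by
  have h' : star x * z = z * star y :=
    calc star x * z = star x * (z * y) * star y := by
          rw [mul_assoc, mul_assoc, Unitary.mul_star_self_of_mem hy, mul_one]
      _ = z * star y := by rw [← h, ← mul_assoc, Unitary.star_mul_self_of_mem hx, one_mul]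
  have hstar : star z * x = y * star z := by simpa using congrArg star h'
  calc y * (star z * z) = star z * (x * z) := by rw [← mul_assoc, ← hstar, mul_assoc]
    _ = star z * z * y := by rw [h, mul_assoc]

section UnitaryPart

variable {A : Type*} [CStarAlgebra A] [PartialOrder A] [StarOrderedRing A]

/-- The unitary factor `z |z|⁻¹` of the polar decomposition of an invertible `z`. -/
noncomputable def unitaryPart (z : A) : A := z * (star z * z) ^ (-(1 / 2) : ℝ)

lemma unitaryPart_mem_unitary {z : A} (hz : IsUnit z) : unitaryPart z ∈ unitary A := by
  have ha : IsStrictlyPositive (star z * z) :=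
    (hz.star.mul hz).isStrictlyPositive (star_mul_self_nonneg z)
  have hunit : IsUnit (unitaryPart z) := hz.mul (ha.rpow _ _).isUnit
  rw [hunit.mem_unitary_iff_star_mul_self, unitaryPart, star_mul,
    CFC.rpow_nonneg.isSelfAdjoint.star_eq]
  calc (star z * z) ^ (-(1 / 2) : ℝ) * star z * (z * (star z * z) ^ (-(1 / 2) : ℝ))
      = (star z * z) ^ (-(1 / 2) : ℝ) * (star z * z) ^ (1 : ℝ) *
          (star z * z) ^ (-(1 / 2) : ℝ) := by
        rw [CFC.rpow_one _ ha.nonneg]; simp only [mul_assoc]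
    _ = (star z * z) ^ (1 / 2 : ℝ) * (star z * z) ^ (-(1 / 2) : ℝ) := by
        rw [← CFC.rpow_add ha.isUnit]; norm_num
    _ = 1 := CFC.rpow_mul_rpow_neg _

lemma mul_unitaryPart_of_mul_eq_mul {x y z : A} (hx : x ∈ unitary A) (hy : y ∈ unitary A)
    (h : x * z = z * y) : x * unitaryPart z = unitaryPart z * y := by
  have hcomm : Commute y ((star z * z) ^ (-(1 / 2) : ℝ)) :=
    ((commute_star_mul_self_of_mul_eq_mul hx hy h).symm.cfc_nnreal _).symm
  rw [unitaryPart, ← mul_assoc, h, mul_assoc, hcomm.eq, ← mul_assoc]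

end UnitaryPart

section Averaging

variable {G A : Type*} [Group G] [TopologicalSpace G] [CompactSpace G]
  [MeasurableSpace G] [OpensMeasurableSpace G] [CStarAlgebra A] (μ : Measure G)

noncomputable def intertwinerAverage (U U' : G →* unitary A) : A :=
  ∫ g, (U' g : A) * star (U g : A) ∂μ

variable {μ} {U U' : G →* unitary A}

lemma integrable_mul_star [IsFiniteMeasure μ] (hU : Continuous fun g ↦ (U g : A))
    (hU' : Continuous fun g ↦ (U' g : A)) :
    Integrable (fun g ↦ (U' g : A) * star (U g : A)) μ :=
  (hU'.mul hU.star).integrable_of_hasCompactSupport (HasCompactSupport.of_compactSpace _)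

lemma mul_intertwinerAverage [MeasurableMul G] [IsFiniteMeasure μ] [μ.IsMulLeftInvariant]
    (hU : Continuous fun g ↦ (U g : A)) (hU' : Continuous fun g ↦ (U' g : A)) (h : G) :
    (U' h : A) * intertwinerAverage μ U U' = intertwinerAverage μ U U' * U h := by
  have hint := integrable_mul_star (μ := μ) hU hU'
  have hstar_inv : star (U h⁻¹ : A) = U h := by
    rw [map_inv, ← Unitary.star_eq_inv, Unitary.coe_star, star_star]
  calc (U' h : A) * intertwinerAverage μ U U'
      = ∫ g, (U' (h * g) : A) * star (U (h⁻¹ * (h * g)) : A) ∂μ := by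
        rw [intertwinerAverage, ← integral_const_mul_of_integrable hint]
        simp [mul_assoc]
    _ = ∫ g, (U' g : A) * star (U (h⁻¹ * g) : A) ∂μ :=
        integral_mul_left_eq_self (fun g ↦ (U' g : A) * star (U (h⁻¹ * g) : A)) h
    _ = ∫ g, (U' g : A) * star (U g : A) * U h ∂μ := by
        simp only [map_mul, Submonoid.coe_mul, star_mul, hstar_inv, mul_assoc]
    _ = intertwinerAverage μ U U' * U h := integral_mul_const_of_integrable hint

lemma norm_intertwinerAverage_sub_one_le [IsProbabilityMeasure μ]
    (hU : Continuous fun g ↦ (U g : A)) (hU' : Continuous fun g ↦ (U' g : A)) {δ : ℝ}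
    (hδ : ∀ g, ‖(U' g : A) - U g‖ ≤ δ) : ‖intertwinerAverage μ U U' - 1‖ ≤ δ := by
  have hsub : intertwinerAverage μ U U' - 1 = ∫ g, ((U' g : A) - U g) * star (U g : A) ∂μ := by
    simp only [sub_mul, Unitary.mul_star_self_of_mem (U _).2]
    rw [integral_sub (integrable_mul_star hU hU') (integrable_const 1), integral_const,
      probReal_univ, one_smul, intertwinerAverage]
  have hbound (g : G) : ‖((U' g : A) - U g) * star (U g : A)‖ ≤ δ := by
    rw [← Unitary.coe_star, CStarRing.norm_mul_coe_unitary]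
    exact hδ g
  simpa [hsub] using norm_integral_le_of_norm_le_const (μ := μ) (.of_forall hbound)

end Averaging

theorem locally_homogeneous_rep_cstar
    {G : Type*} [Group G] [TopologicalSpace G] [IsTopologicalGroup G] [CompactSpace G]
    {A : Type*} [NormedRing A] [StarRing A] [CStarRing A] [NormedAlgebra ℂ A]
    [CompleteSpace A] [StarModule ℂ A]
    (U : G →* unitary A) (hU : Continuous fun g : G => (U g : A)) :
    ∃ ε > (0 : ℝ), ∀ U' : G →* unitary A,
      (Continuous fun g : G => (U' g : A)) →
      (⨆ g : G, ‖(U' g : A) - (U g : A)‖) < ε →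
      ∃ v ∈ unitary A, ∀ g : G, (U' g : A) = v * (U g : A) * star v := by
  let _ : CStarAlgebra A := {}
  let _ := CStarAlgebra.spectralOrder A
  let _ := CStarAlgebra.spectralOrderedRing A
  borelize G
  let μ := Measure.haarMeasure (⊤ : TopologicalSpace.PositiveCompacts G)
  have : IsProbabilityMeasure μ := ⟨Measure.haarMeasure_self⟩
  refine ⟨1, one_pos, fun U' hU' hclose => ?_⟩
  set z := intertwinerAverage μ U U'
  have hbound (g : G) : ‖(U' g : A) - U g‖ ≤ ⨆ g, ‖(U' g : A) - U g‖ :=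
    le_ciSup (isCompact_range (hU'.sub hU).norm).bddAbove g
  have hz : IsUnit z := by
    have hnorm : ‖1 - z‖ < 1 := by
      rw [norm_sub_rev]
      exact (norm_intertwinerAverage_sub_one_le hU hU' hbound).trans_lt hclose
    simpa using isUnit_one_sub_of_norm_lt_one hnorm
  refine ⟨unitaryPart z, unitaryPart_mem_unitary hz, fun g => ?_⟩
  rw [← mul_unitaryPart_of_mul_eq_mul (U' g).2 (U g).2 (mul_intertwinerAverage hU hU' g),
    mul_assoc, Unitary.mul_star_self_of_mem (unitaryPart_mem_unitary hz), mul_one]
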